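/- arXiv:2102.07560 — 7 statements merged into one kernel-verified Lean document; each statement's English description precedes it below -/
import Mathlib

section
/- Let Φ = (G, φ) be a complex unit gain graph with n vertices, m edges and chromatic number χ, and set a(Φ) = (1/m) Σ_{edges} (1 − Re(a_{ij})). Then for every real γ, λ₁(Φ) ≤ (2m/n)·( a(Φ) − (γ−1)²(a(Φ)−1)/(χ + γ² − 1) ). -/
/-!
Test the Rayleigh quotient of `L` on the `χ` vectors `x_t` (`t` a colour of a proper
`χ`-colouring) that equal `γ` on the colour class `t` and `1` elsewhere. Summed over `t`, their
squared norms give `n (χ + γ² - 1)`, and since adjacent vertices have different colours the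
quadratic forms add up to `(χ + γ² - 1) Σ dᵢ - (χ + 2γ - 2) Σ_{i,j} Re aᵢⱼ`, where
`Σ dᵢ = 2m` and `Σ_{i,j} Re aᵢⱼ = 2m (1 - a(Φ))`. Comparing the two sums with
`λ₁ ‖x_t‖² ≤ x_t* L x_t` gives the bound.
-/

open Matrix BigOperators

/-- `a(Φ) = (1/m) Σ_{v_i ∼ v_j, i<j} (1 − Re(a_{ij}))`. -/
noncomputable def aPhi {n : ℕ} (G : SimpleGraph (Fin n)) [DecidableRel G.Adj]
    (A : Matrix (Fin n) (Fin n) ℂ) (m : ℕ) : ℝ :=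
  (1 / (m : ℝ)) * ∑ i : Fin n, ∑ j : Fin n,
    if i < j ∧ G.Adj i j then 1 - (A i j).re else 0

open scoped ComplexOrder in
theorem Matrix.IsHermitian.mul_re_dotProduct_self_le {n 𝕜 : Type*} [Fintype n] [DecidableEq n]
    [RCLike 𝕜] {L : Matrix n n 𝕜} (hL : L.IsHermitian) {c : ℝ} (hc : ∀ k, c ≤ hL.eigenvalues k)
    (x : n → 𝕜) : c * RCLike.re (star x ⬝ᵥ x) ≤ RCLike.re (star x ⬝ᵥ L *ᵥ x) := by
  have hshift : (L - algebraMap 𝕜 _ c).PosSemidef := by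
    refine posSemidef_iff_isHermitian_and_spectrum_nonneg.mpr ⟨?_, ?_⟩
    · exact IsSelfAdjoint.sub hL (.algebraMap _ (RCLike.conj_ofReal c))
    · rw [← spectrum.sub_singleton_eq, hL.spectrum_eq_image_range]
      rintro _ ⟨_, ⟨_, ⟨k, rfl⟩, rfl⟩, _, rfl, rfl⟩
      change (0 : 𝕜) ≤ (hL.eigenvalues k : 𝕜) - c
      rw [← RCLike.ofReal_sub, RCLike.ofReal_nonneg, sub_nonneg]
      exact hc k
  have := hshift.re_dotProduct_nonneg x
  rwa [sub_mulVec, dotProduct_sub, map_sub, Algebra.algebraMap_eq_smul_one, smul_mulVec,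
    one_mulVec, dotProduct_smul, smul_eq_mul, RCLike.re_ofReal_mul, sub_nonneg] at this

theorem Matrix.re_star_dotProduct_self_ofReal {n 𝕜 : Type*} [Fintype n] [RCLike 𝕜] (x : n → ℝ) :
    RCLike.re (star (fun i => (x i : 𝕜)) ⬝ᵥ fun i => (x i : 𝕜)) = ∑ i, x i * x i := by
  simp only [dotProduct, Pi.star_apply, RCLike.star_def, RCLike.conj_ofReal, ← RCLike.ofReal_mul,
    map_sum, RCLike.ofReal_re]

theorem Matrix.re_star_dotProduct_mulVec_ofReal {n 𝕜 : Type*} [Fintype n] [RCLike 𝕜]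
    (M : Matrix n n 𝕜) (x : n → ℝ) :
    RCLike.re (star (fun i => (x i : 𝕜)) ⬝ᵥ M *ᵥ fun i => (x i : 𝕜))
      = ∑ i, ∑ j, x i * x j * RCLike.re (M i j) := by
  simp only [dotProduct, mulVec, Finset.mul_sum, map_sum, Pi.star_apply, RCLike.star_def,
    RCLike.conj_ofReal]
  refine Finset.sum_congr rfl fun i _ => Finset.sum_congr rfl fun j _ => ?_
  rw [mul_left_comm, ← RCLike.ofReal_mul, RCLike.re_mul_ofReal, mul_comm]

theorem Finset.sum_sum_eq_two_mul_sum_sum_lt {ι R : Type*} [Fintype ι] [LinearOrder ι]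
    [NonAssocSemiring R] {f : ι → ι → R} (hf : ∀ i j, f i j = f j i) (hdiag : ∀ i, f i i = 0) :
    ∑ i, ∑ j, f i j = 2 * ∑ i, ∑ j, if i < j then f i j else 0 := by
  have hsplit : ∀ i j, f i j = (if i < j then f i j else 0) + if j < i then f j i else 0 := by
    intro i j
    rcases lt_trichotomy i j with h | rfl | h
    · simp [h, h.not_gt]
    · simp [hdiag]
    · simp [h, h.not_gt, hf i j]
  rw [Fintype.sum_congr _ _ fun i => Fintype.sum_congr _ _ (hsplit i)]
  simp only [Finset.sum_add_distrib]
  rw [Finset.sum_comm (f := fun i j => if j < i then f j i else 0), two_mul]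

section ColorClassVec

variable {V α : Type*} [Fintype α] [DecidableEq α]

def colorClassVec (C : V → α) (γ : ℝ) (t : α) : V → ℝ := fun i => if C i = t then γ else 1

theorem sum_colorClassVec_mul_self (C : V → α) (γ : ℝ) (i : V) :
    ∑ t, colorClassVec C γ t i * colorClassVec C γ t i = Fintype.card α + γ ^ 2 - 1 := by
  have h : ∀ t, colorClassVec C γ t i * colorClassVec C γ t i
      = 1 + if C i = t then γ ^ 2 - 1 else 0 := by
    intro t
    unfold colorClassVec
    split_ifs <;> ring
  simp only [h, Finset.sum_add_distrib, Finset.sum_ite_eq, Finset.mem_univ, if_true,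
    Finset.sum_const, Finset.card_univ, nsmul_eq_mul, mul_one]
  ring

theorem sum_colorClassVec_mul_of_ne {C : V → α} (γ : ℝ) {i j : V} (hij : C i ≠ C j) :
    ∑ t, colorClassVec C γ t i * colorClassVec C γ t j = Fintype.card α + 2 * γ - 2 := by
  have h : ∀ t, colorClassVec C γ t i * colorClassVec C γ t j
      = 1 + ((if C i = t then γ - 1 else 0) + if C j = t then γ - 1 else 0) := by
    intro t
    unfold colorClassVec
    split_ifs with hi hj
    · exact absurd (hi.trans hj.symm) hij
    all_goals ring
  simp only [h, Finset.sum_add_distrib, Finset.sum_ite_eq, Finset.mem_univ, if_true,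
    Finset.sum_const, Finset.card_univ, nsmul_eq_mul, mul_one]
  ring

theorem sum_re_star_dotProduct_self_colorClassVec {𝕜 : Type*} [Fintype V] [RCLike 𝕜]
    (C : V → α) (γ : ℝ) :
    ∑ t, RCLike.re (star (fun i => (colorClassVec C γ t i : 𝕜)) ⬝ᵥ
        fun i => (colorClassVec C γ t i : 𝕜))
      = Fintype.card V * (Fintype.card α + γ ^ 2 - 1) := by
  simp only [re_star_dotProduct_self_ofReal]
  rw [Finset.sum_comm]
  simp only [sum_colorClassVec_mul_self, Finset.sum_const, Finset.card_univ, nsmul_eq_mul]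

end ColorClassVec

namespace SimpleGraph

variable {V α 𝕜 : Type*} [Fintype V] [DecidableEq V] [Fintype α] [DecidableEq α] [RCLike 𝕜]
  {G : SimpleGraph V} [DecidableRel G.Adj] {A : Matrix V V 𝕜}

theorem Coloring.sum_colorClassVec_mul_mul_re_diagonal_sub_apply
    (hzero : ∀ i j, ¬ G.Adj i j → A i j = 0) (C : G.Coloring α) (γ : ℝ) (i j : V) :
    (∑ t, colorClassVec C γ t i * colorClassVec C γ t j) *
        RCLike.re ((diagonal (fun i => (G.degree i : 𝕜)) - A) i j)
      = (if i = j then (Fintype.card α + γ ^ 2 - 1) * G.degree i else 0)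
        - (Fintype.card α + 2 * γ - 2) * RCLike.re (A i j) := by
  by_cases hij : i = j
  · subst hij
    simp [hzero i i (G.irrefl), sum_colorClassVec_mul_self]
  by_cases hadj : G.Adj i j
  · simp [hij, sum_colorClassVec_mul_of_ne γ (C.valid hadj)]
  · simp [hij, hzero i j hadj]

theorem Coloring.sum_re_star_dotProduct_mulVec_colorClassVec
    (hzero : ∀ i j, ¬ G.Adj i j → A i j = 0) (C : G.Coloring α) (γ : ℝ) :
    ∑ t, RCLike.re (star (fun i => (colorClassVec C γ t i : 𝕜)) ⬝ᵥ
        (diagonal (fun i => (G.degree i : 𝕜)) - A) *ᵥ fun i => (colorClassVec C γ t i : 𝕜))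
      = (Fintype.card α + γ ^ 2 - 1) * ∑ i, (G.degree i : ℝ)
        - (Fintype.card α + 2 * γ - 2) * ∑ i, ∑ j, RCLike.re (A i j) := by
  simp only [re_star_dotProduct_mulVec_ofReal]
  calc _ = ∑ i, ∑ j, (∑ t, colorClassVec C γ t i * colorClassVec C γ t j) *
        RCLike.re ((diagonal (fun i => (G.degree i : 𝕜)) - A) i j) := by
        rw [Finset.sum_comm]
        refine Finset.sum_congr rfl fun i _ => ?_
        rw [Finset.sum_comm]
        simp only [Finset.sum_mul]
    _ = _ := by
        simp only [C.sum_colorClassVec_mul_mul_re_diagonal_sub_apply hzero,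
          Finset.sum_sub_distrib, Finset.sum_ite_eq, Finset.mem_univ, if_true, Finset.mul_sum]

end SimpleGraph

theorem SimpleGraph.sum_sum_adj_eq_two_mul_card_edgeFinset {V : Type*} [Fintype V]
    (G : SimpleGraph V) [DecidableRel G.Adj] :
    ∑ i, ∑ j, (if G.Adj i j then 1 else 0 : ℝ) = 2 * G.edgeFinset.card := by
  simp only [Finset.sum_boole, ← neighborFinset_eq_filter, card_neighborFinset_eq_degree]
  exact_mod_cast G.sum_degrees_eq_twice_card_edges

theorem sum_re_eq_two_mul_one_sub_aPhi {n m : ℕ} (G : SimpleGraph (Fin n)) [DecidableRel G.Adj]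
    {A : Matrix (Fin n) (Fin n) ℂ} (hsym : ∀ i j, A j i = star (A i j))
    (hzero : ∀ i j, ¬ G.Adj i j → A i j = 0) (hm : G.edgeFinset.card = m) (hm0 : m ≠ 0) :
    ∑ i, ∑ j, (A i j).re = 2 * m * (1 - aPhi G A m) := by
  set f : Fin n → Fin n → ℝ := fun i j => if G.Adj i j then 1 - (A i j).re else 0
  have hre : ∀ i j, (A i j).re = (if G.Adj i j then 1 else 0) - f i j := by
    intro i j
    by_cases hij : G.Adj i j
    · simp [f, hij]
    · simp [f, hij, hzero i j hij]
  have hf : ∑ i, ∑ j, f i j = 2 * (m * aPhi G A m) := by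
    rw [Finset.sum_sum_eq_two_mul_sum_sum_lt (fun i j => by simp [f, G.adj_comm, hsym i j])
      (fun i => by simp [f])]
    simp only [aPhi, f, ite_and]
    field_simp
  simp only [hre, Finset.sum_sub_distrib, G.sum_sum_adj_eq_two_mul_card_edgeFinset, hm, hf]
  ring

theorem least_eigenvalue_chromatic_bound_gamma_general {n m χ : ℕ}
    (G : SimpleGraph (Fin n)) [DecidableRel G.Adj]
    (A : Matrix (Fin n) (Fin n) ℂ)
    (hsym : ∀ i j, A j i = star (A i j))
    (hzero : ∀ i j, ¬ G.Adj i j → A i j = 0)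
    (L : Matrix (Fin n) (Fin n) ℂ)
    (hLdef : L = Matrix.diagonal (fun i => (G.degree i : ℂ)) - A)
    (hL : L.IsHermitian)
    (hm : G.edgeFinset.card = m) (hm1 : 1 ≤ m)
    (hχ : G.chromaticNumber = χ) :
    ∀ γ : ℝ,
      ∃ k, hL.eigenvalues k ≤
        (2 * m / n) * (aPhi G A m -
          (γ - 1) ^ 2 * (aPhi G A m - 1) / (χ + γ ^ 2 - 1)) := by
  intro γ
  subst hLdef
  have hG : G ≠ ⊥ := SimpleGraph.edgeFinset_nonempty.mp (Finset.card_pos.mp (by omega))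
  obtain ⟨u, -, -⟩ := SimpleGraph.ne_bot_iff_exists_adj.mp hG
  obtain ⟨C⟩ : G.Colorable χ := SimpleGraph.chromaticNumber_le_iff_colorable.mp hχ.le
  have hχ2 : (2 : ℝ) ≤ χ := by
    exact_mod_cast hχ ▸ SimpleGraph.two_le_chromaticNumber_iff_ne_bot.mpr hG
  have hd : 0 < (χ : ℝ) + γ ^ 2 - 1 := by nlinarith [sq_nonneg γ]
  have hn : (0 : ℝ) < n := by exact_mod_cast u.pos
  have hdeg : ∑ i, (G.degree i : ℝ) = 2 * m := by
    exact_mod_cast hm ▸ G.sum_degrees_eq_twice_card_edges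
  obtain ⟨k, -, hk⟩ := Finset.univ.exists_min_image hL.eigenvalues ⟨u, Finset.mem_univ u⟩
  refine ⟨k, ?_⟩
  have hrayleigh := Finset.sum_le_sum fun t (_ : t ∈ Finset.univ) =>
    hL.mul_re_dotProduct_self_le (fun j => hk j (Finset.mem_univ j))
      (fun i => RCLike.ofReal (colorClassVec C γ t i))
  rw [← Finset.mul_sum, sum_re_star_dotProduct_self_colorClassVec,
    C.sum_re_star_dotProduct_mulVec_colorClassVec hzero] at hrayleigh
  simp only [RCLike.re_to_complex, Fintype.card_fin] at hrayleigh
  rw [sum_re_eq_two_mul_one_sub_aPhi G hsym hzero hm (by omega), hdeg] at hrayleigh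
  calc hL.eigenvalues k
      ≤ ((χ + γ ^ 2 - 1) * (2 * m) - (χ + 2 * γ - 2) * (2 * m * (1 - aPhi G A m))) /
          (n * (χ + γ ^ 2 - 1)) := (le_div_iff₀ (by positivity)).mpr hrayleigh
    _ = _ := by field_simp; ring

/-- Chromatic-number bound for `λ₁(Φ)` with a free parameter `γ`. -/
theorem least_eigenvalue_chromatic_bound_gamma {n m χ : ℕ}
    (G : SimpleGraph (Fin n)) [DecidableRel G.Adj]
    (A : Matrix (Fin n) (Fin n) ℂ)
    (hsym : ∀ i j, A j i = star (A i j))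
    (hunit : ∀ i j, G.Adj i j → ‖A i j‖ = 1)
    (hzero : ∀ i j, ¬ G.Adj i j → A i j = 0)
    (L : Matrix (Fin n) (Fin n) ℂ)
    (hLdef : L = Matrix.diagonal (fun i => (G.degree i : ℂ)) - A)
    (hL : L.IsHermitian)
    (hm : G.edgeFinset.card = m) (hm1 : 1 ≤ m)
    (hχ : G.chromaticNumber = χ) :
    ∀ γ : ℝ,
      ∃ k, hL.eigenvalues k ≤
        (2 * m / n) * (aPhi G A m -
          (γ - 1) ^ 2 * (aPhi G A m - 1) / (χ + γ ^ 2 - 1)) :=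
  least_eigenvalue_chromatic_bound_gamma_general G A hsym hzero L hLdef hL hm hm1 hχ
end

section
/- Let G be a graph with n vertices, m edges and chromatic number χ. The least eigenvalue λ₁(−) of the signless Laplacian Q(G) = D(G) + A(G) satisfies λ₁(−) ≤ (2m/n)·(1 − 1/(χ−1)). -/
/-!
Fix a proper colouring `C` with `χ` colours and, for each ordered pair of colours `(a, b)`, the test
vector `x_ab = 1_{C = a} - 1_{C = b}`. Summed over all pairs, `x_ab(u) x_ab(v)` adds up to
`2χ - 2` when `u` and `v` share a colour and to `-2` otherwise. Hence `∑ ‖x_ab‖² = (2χ - 2) n`,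
while `∑ x_abᵀ Q x_ab = (2χ - 4) · 2m` because adjacent vertices have different colours.
Summing `λ_min ‖x_ab‖² ≤ x_abᵀ Q x_ab` over all pairs gives the bound.
-/

open Matrix Finset

theorem Matrix.IsHermitian.mul_dotProduct_self_le_dotProduct_mulVec {ι : Type*} [Fintype ι]
    [DecidableEq ι] {Q : Matrix ι ι ℝ} (hQ : Q.IsHermitian) {μ : ℝ}
    (hμ : ∀ i, μ ≤ hQ.eigenvalues i) (x : ι → ℝ) : μ * (x ⬝ᵥ x) ≤ x ⬝ᵥ Q *ᵥ x := by
  open scoped MatrixOrder in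
  have hle : algebraMap ℝ (Matrix ι ι ℝ) μ ≤ Q := by
    rw [algebraMap_le_iff_le_spectrum hQ.isSelfAdjoint, hQ.spectrum_real_eq_range_eigenvalues]
    rintro _ ⟨i, rfl⟩
    exact hμ i
  simpa [sub_mulVec, Algebra.algebraMap_eq_smul_one, smul_mulVec] using
    (Matrix.le_iff.mp hle).dotProduct_mulVec_nonneg x

theorem Matrix.sum_dotProduct_mulVec {ι V R : Type*} [Fintype ι] [Fintype V] [CommSemiring R]
    (M : Matrix V V R) (x : ι → V → R) :
    ∑ i, x i ⬝ᵥ M *ᵥ x i = ∑ u, ∑ v, M u v * ∑ i, x i u * x i v := by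
  simp only [dotProduct, mulVec, mul_sum]
  rw [sum_comm]
  refine sum_congr rfl fun u _ => ?_
  rw [sum_comm]
  refine sum_congr rfl fun v _ => sum_congr rfl fun i _ => ?_
  ring

section ColorDiffVector

variable {V α : Type*} [Fintype α] [DecidableEq α]

def colorDiffVector (C : V → α) (p : α × α) (v : V) : ℝ :=
  (if C v = p.1 then 1 else 0) - (if C v = p.2 then 1 else 0)

theorem sum_colorDiffVector_mul (C : V → α) (u v : V) :
    ∑ p, colorDiffVector C p u * colorDiffVector C p v =
      2 * Fintype.card α * (if C u = C v then 1 else 0) - 2 := by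
  by_cases h : C u = C v <;>
    simp [colorDiffVector, Fintype.sum_prod_type, mul_sub, sum_sub_distrib, mul_ite, h, eq_comm] <;>
    ring

theorem sum_dotProduct_colorDiffVector_self [Fintype V] (C : V → α) :
    ∑ p, colorDiffVector C p ⬝ᵥ colorDiffVector C p =
      (2 * Fintype.card α - 2) * Fintype.card V := by
  simp only [dotProduct]
  rw [sum_comm]
  simp [sum_colorDiffVector_mul]
  ring

end ColorDiffVector

namespace SimpleGraph

variable {V : Type*} (G : SimpleGraph V) [DecidableRel G.Adj]

def signlessLapMatrix (R : Type*) [AddMonoidWithOne R] [Fintype V] [DecidableEq V] :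
    Matrix V V R :=
  G.degMatrix R + G.adjMatrix R

variable {G} [Fintype V] [DecidableEq V]

theorem Coloring.sum_colorDiffVector_dotProduct_signlessLapMatrix_mulVec {α : Type*} [Fintype α]
    [DecidableEq α] (C : G.Coloring α) :
    ∑ p, colorDiffVector C p ⬝ᵥ G.signlessLapMatrix ℝ *ᵥ colorDiffVector C p =
      (2 * Fintype.card α - 4) * (2 * #G.edgeFinset) := by
  rw [sum_dotProduct_mulVec]
  simp only [sum_colorDiffVector_mul]
  have hterm : ∀ u v, G.signlessLapMatrix ℝ u v *
      (2 * Fintype.card α * (if C u = C v then 1 else 0) - 2) =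
        (if u = v then (G.degree u : ℝ) * (2 * Fintype.card α - 2) else 0) +
          G.adjMatrix ℝ u v * (-2) := by
    intro u v
    obtain rfl | huv := eq_or_ne u v
    · simp [signlessLapMatrix, degMatrix]
    by_cases hadj : G.Adj u v
    · simp [signlessLapMatrix, degMatrix, huv, hadj, C.valid hadj]
    · simp [signlessLapMatrix, degMatrix, huv, hadj]
  have hdeg : ∑ u, (G.degree u : ℝ) = 2 * #G.edgeFinset := by
    exact_mod_cast G.sum_degrees_eq_twice_card_edges
  simp only [hterm, sum_add_distrib, sum_ite_eq, mem_univ, if_true, ← sum_mul,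
    adjMatrix_apply, ← degree_eq_sum_if_adj, hdeg]
  ring

end SimpleGraph

/-- The least eigenvalue of the signless Laplacian `Q(G) = D(G) + A(G)` satisfies
`λ₁(−) ≤ (2m/n)(1 − 1/(χ−1))`. -/
theorem signless_laplacian_least_eigenvalue_chromatic_bound {n m χ : ℕ}
    (G : SimpleGraph (Fin n)) [DecidableRel G.Adj]
    (Q : Matrix (Fin n) (Fin n) ℝ)
    (hQdef : Q = Matrix.diagonal (fun i => (G.degree i : ℝ)) + G.adjMatrix ℝ)
    (hQ : Q.IsHermitian)
    (hm : G.edgeFinset.card = m) (hm1 : 1 ≤ m)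
    (hχ : G.chromaticNumber = χ) (hχ2 : 2 ≤ χ) :
    ∃ k, hQ.eigenvalues k ≤ (2 * m / n) * (1 - 1 / ((χ : ℝ) - 1)) := by
  obtain ⟨C⟩ : G.Colorable χ := SimpleGraph.chromaticNumber_le_iff_colorable.mp hχ.le
  have hV : Nonempty (Fin n) := by
    obtain ⟨e, -⟩ := card_pos.mp (hm ▸ hm1 : 0 < #G.edgeFinset)
    exact e.inductionOn fun u _ => ⟨u⟩
  obtain ⟨k, hk⟩ := Finite.exists_min hQ.eigenvalues
  refine ⟨k, ?_⟩
  have hform : ∑ p, colorDiffVector C p ⬝ᵥ Q *ᵥ colorDiffVector C p = (2 * χ - 4) * (2 * m) := by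
    rw [show Q = G.signlessLapMatrix ℝ from hQdef,
      C.sum_colorDiffVector_dotProduct_signlessLapMatrix_mulVec, hm, Fintype.card_fin]
  have hrayleigh := sum_le_sum fun p (_ : p ∈ univ) =>
    hQ.mul_dotProduct_self_le_dotProduct_mulVec hk (colorDiffVector C p)
  rw [← mul_sum, sum_dotProduct_colorDiffVector_self, hform, Fintype.card_fin,
    Fintype.card_fin] at hrayleigh
  have hχR : (2 : ℝ) ≤ χ := by exact_mod_cast hχ2
  have hχ1 : (χ : ℝ) - 1 ≠ 0 := by linarith
  have hn : (0 : ℝ) < n := by exact_mod_cast Fin.pos_iff_nonempty.mpr hV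
  rw [show (2 * m / n) * (1 - 1 / ((χ : ℝ) - 1)) = (2 * χ - 4) * (2 * m) / ((2 * χ - 2) * n) by
    field_simp; ring]
  exact (le_div_iff₀ (by nlinarith)).mpr hrayleigh
end

section
/- Let Φ = (G, φ) be a connected nonempty complex unit gain graph. Then λ₁(Φ) ≤ min over edges v_s ∼ v_t of (d_s + d_t − 2)/2, where d_s denotes the degree of v_s. -/
/-!
The least eigenvalue of a Hermitian matrix bounds every Rayleigh quotient from below. For an edge
`v_s ∼ v_t` take the test vector `x = e_s + conj (A s t) e_t`: since `|A s t| = 1`, we get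
`x* x = 2` and `x* L x = d_s + d_t - 2`, the two off-diagonal terms each contributing `-1`.
-/

open Matrix
open scoped MatrixOrder ComplexOrder

namespace Matrix

variable {n 𝕜 : Type*} [Fintype n] [DecidableEq n] [RCLike 𝕜] {A : Matrix n n 𝕜}

theorem IsHermitian.posSemidef_sub_algebraMap_of_le_eigenvalues (hA : A.IsHermitian) {c : ℝ}
    (hc : ∀ i, c ≤ hA.eigenvalues i) : (A - algebraMap ℝ (Matrix n n 𝕜) c).PosSemidef := by
  rw [← le_iff, algebraMap_le_iff_le_spectrum hA.isSelfAdjoint,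
    hA.spectrum_real_eq_range_eigenvalues]
  rintro _ ⟨i, rfl⟩
  exact hc i

theorem IsHermitian.exists_eigenvalue_mul_dotProduct_le [Nonempty n] (hA : A.IsHermitian)
    (x : n → 𝕜) :
    ∃ k, hA.eigenvalues k * RCLike.re (star x ⬝ᵥ x) ≤ RCLike.re (star x ⬝ᵥ (A *ᵥ x)) := by
  obtain ⟨k, -, hk⟩ := Finset.univ.exists_min_image hA.eigenvalues Finset.univ_nonempty
  refine ⟨k, ?_⟩
  have hpos := (hA.posSemidef_sub_algebraMap_of_le_eigenvalues
    fun i => hk i (Finset.mem_univ i)).re_dotProduct_nonneg x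
  rw [sub_mulVec, dotProduct_sub, map_sub, Algebra.algebraMap_eq_smul_one, smul_mulVec,
    one_mulVec, dotProduct_smul, RCLike.smul_re, sub_nonneg] at hpos
  exact hpos

theorem dotProduct_mulVec_single_add_single (M : Matrix n n 𝕜) (s t : n) (a b : 𝕜) :
    star (Pi.single s a + Pi.single t b) ⬝ᵥ (M *ᵥ (Pi.single s a + Pi.single t b)) =
      star a * M s s * a + star a * M s t * b + star b * M t s * a + star b * M t t * b := by
  simp only [star_add, Pi.star_single, mulVec_add, mulVec_single, op_smul_eq_smul, dotProduct_add,
    dotProduct_smul, add_dotProduct, single_dotProduct, col_apply, smul_eq_mul]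
  ring

theorem dotProduct_single_add_single {s t : n} (hst : s ≠ t) (a b : 𝕜) :
    star (Pi.single s a + Pi.single t b) ⬝ᵥ (Pi.single s a + Pi.single t b) =
      star a * a + star b * b := by
  simpa [one_apply_ne hst, one_apply_ne hst.symm] using
    dotProduct_mulVec_single_add_single 1 s t a b

end Matrix

theorem least_eigenvalue_degree_bound_general {n : ℕ}
    (G : SimpleGraph (Fin n)) [DecidableRel G.Adj]
    (A : Matrix (Fin n) (Fin n) ℂ)
    (hsym : ∀ i j, A j i = star (A i j))
    (hunit : ∀ i j, G.Adj i j → ‖A i j‖ = 1)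
    (hzero : ∀ i j, ¬ G.Adj i j → A i j = 0)
    (L : Matrix (Fin n) (Fin n) ℂ)
    (hLdef : L = Matrix.diagonal (fun i => (G.degree i : ℂ)) - A)
    (hL : L.IsHermitian) :
    ∀ s t, G.Adj s t →
      ∃ k, hL.eigenvalues k ≤ ((G.degree s : ℝ) + G.degree t - 2) / 2 := by
  intro s t hst
  have : Nonempty (Fin n) := ⟨s⟩
  have hA : A s t * star (A s t) = 1 := by
    rw [RCLike.star_def, RCLike.mul_conj, hunit s t hst]
    norm_num
  set x : Fin n → ℂ := Pi.single s 1 + Pi.single t (star (A s t)) with hx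
  have hxx : star x ⬝ᵥ x = 2 := by
    rw [hx, dotProduct_single_add_single hst.ne, star_one, star_star]
    linear_combination hA
  have hxLx : star x ⬝ᵥ (L *ᵥ x) = G.degree s + G.degree t - 2 := by
    rw [hx, dotProduct_mulVec_single_add_single, hLdef]
    simp only [Matrix.sub_apply, diagonal_apply_eq, diagonal_apply_ne _ hst.ne,
      diagonal_apply_ne _ hst.ne', hzero s s (G.irrefl), hzero t t (G.irrefl), hsym s t,
      star_one, star_star]
    linear_combination (G.degree t - 2 : ℂ) * hA
  obtain ⟨k, hk⟩ := hL.exists_eigenvalue_mul_dotProduct_le x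
  refine ⟨k, ?_⟩
  rw [hxx, hxLx] at hk
  simp only [RCLike.ofNat_re, RCLike.re_to_complex, Complex.sub_re, Complex.add_re,
    Complex.natCast_re, Complex.re_ofNat] at hk
  linarith

/-- For a connected nonempty gain graph, `λ₁(Φ) ≤ (d_s + d_t − 2)/2` for every edge `v_s ∼ v_t`. -/
theorem least_eigenvalue_degree_bound {n : ℕ}
    (G : SimpleGraph (Fin n)) [DecidableRel G.Adj]
    (A : Matrix (Fin n) (Fin n) ℂ)
    (hsym : ∀ i j, A j i = star (A i j))
    (hunit : ∀ i j, G.Adj i j → ‖A i j‖ = 1)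
    (hzero : ∀ i j, ¬ G.Adj i j → A i j = 0)
    (L : Matrix (Fin n) (Fin n) ℂ)
    (hLdef : L = Matrix.diagonal (fun i => (G.degree i : ℂ)) - A)
    (hL : L.IsHermitian)
    (hconn : G.Connected) :
    ∀ s t, G.Adj s t →
      ∃ k, hL.eigenvalues k ≤ ((G.degree s : ℝ) + G.degree t - 2) / 2 :=
  least_eigenvalue_degree_bound_general G A hsym hunit hzero L hLdef hL
end

section
/- Let Φ = (G, φ) be a connected nonempty complex unit gain graph. Then λ₁(Φ) ≤ min over edges v_s ∼ v_t of (1/2)( d_s + d_t − √((d_s − d_t)² + 4) ). -/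
/-!
Rayleigh quotients of `L(Φ)` bound `λ₁(Φ)` from above. Take the test vector supported on the
edge `v_s v_t` with `x_s = φ(v_s v_t)` and `x_t = β` real: since `|φ| = 1` the gains cancel, and
`x* L x / x* x = (d_s - 2β + d_t β²) / (1 + β²)` is the Rayleigh quotient of `!![d_s, -1; -1, d_t]`
at `(1, β)`. Choosing `(1, β)` to be an eigenvector for the least eigenvalue `μ` of that matrix,
i.e. `β = d_s - μ`, makes the quotient equal to `μ`.
-/

open Matrix
open scoped ComplexOrder

namespace Matrix

variable {ι 𝕜 : Type*} [Fintype ι] [DecidableEq ι] [RCLike 𝕜]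

theorem IsHermitian.posSemidef_sub_smul_one {A : Matrix ι ι 𝕜} (hA : A.IsHermitian) {c : ℝ}
    (hc : ∀ i, c ≤ hA.eigenvalues i) : (A - (c : 𝕜) • 1).PosSemidef := by
  have hdiag : (diagonal (RCLike.ofReal ∘ hA.eigenvalues) - (c : 𝕜) • 1 : Matrix ι ι 𝕜) =
      diagonal fun i => ((hA.eigenvalues i - c : ℝ) : 𝕜) := by
    rw [smul_one_eq_diagonal, diagonal_sub]
    congr 1
    ext i
    simp
  have hpsd : (diagonal fun i => ((hA.eigenvalues i - c : ℝ) : 𝕜)).PosSemidef :=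
    PosSemidef.diagonal fun i => RCLike.ofReal_nonneg.mpr (sub_nonneg.mpr (hc i))
  rw [hA.spectral_theorem, ← map_one (Unitary.conjStarAlgAut 𝕜 _ hA.eigenvectorUnitary),
    ← map_smul, ← map_sub, hdiag, Unitary.conjStarAlgAut_apply]
  exact hpsd.mul_mul_conjTranspose_same _

theorem IsHermitian.exists_eigenvalues_mul_le [Nonempty ι] {A : Matrix ι ι 𝕜}
    (hA : A.IsHermitian) (x : ι → 𝕜) :
    ∃ k, hA.eigenvalues k * RCLike.re (star x ⬝ᵥ x) ≤ RCLike.re (star x ⬝ᵥ A *ᵥ x) := by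
  obtain ⟨k, hk⟩ := Finite.exists_min hA.eigenvalues
  refine ⟨k, ?_⟩
  have := (hA.posSemidef_sub_smul_one hk).re_dotProduct_nonneg x
  rw [sub_mulVec, dotProduct_sub, smul_mulVec, one_mulVec, dotProduct_smul, map_sub,
    smul_eq_mul, RCLike.re_ofReal_mul] at this
  linarith

theorem star_single_add_single_dotProduct_mulVec {R : Type*} [CommSemiring R] [StarRing R]
    (M : Matrix ι ι R) (s t : ι) (a b : R) :
    star (Pi.single s a + Pi.single t b) ⬝ᵥ M *ᵥ (Pi.single s a + Pi.single t b) =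
      star a * M s s * a + star a * M s t * b + star b * M t s * a + star b * M t t * b := by
  simp only [star_add, Pi.star_single, mulVec_add, dotProduct_add, add_dotProduct,
    single_dotProduct, mulVec_single, Pi.smul_apply, col_apply, MulOpposite.smul_eq_mul_unop,
    MulOpposite.unop_op]
  ring

theorem re_star_single_add_single_dotProduct_self {s t : ι} (hst : s ≠ t) (a b : 𝕜) :
    RCLike.re (star (Pi.single s a + Pi.single t b : ι → 𝕜) ⬝ᵥ (Pi.single s a + Pi.single t b)) =
      ‖a‖ ^ 2 + ‖b‖ ^ 2 := by
  simp [hst, hst.symm, RCLike.star_def, RCLike.conj_mul]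

end Matrix

/-- The smaller root of `(a - μ) * (b - μ) = 1`, i.e. the least eigenvalue of `!![a, -1; -1, b]`. -/
noncomputable def edgeEigenvalue (a b : ℝ) : ℝ :=
  (a + b - √((a - b) ^ 2 + 4)) / 2

theorem sub_edgeEigenvalue_mul_sub_edgeEigenvalue (a b : ℝ) :
    (a - edgeEigenvalue a b) * (b - edgeEigenvalue a b) = 1 := by
  have hsq : √((a - b) ^ 2 + 4) ^ 2 = (a - b) ^ 2 + 4 := Real.sq_sqrt (by positivity)
  unfold edgeEigenvalue
  linear_combination hsq / 4

theorem sub_two_mul_add_mul_sq_eq_edgeEigenvalue_mul (a b : ℝ) :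
    a - 2 * (a - edgeEigenvalue a b) + b * (a - edgeEigenvalue a b) ^ 2 =
      edgeEigenvalue a b * (1 + (a - edgeEigenvalue a b) ^ 2) := by
  linear_combination (a - edgeEigenvalue a b) * sub_edgeEigenvalue_mul_sub_edgeEigenvalue a b

namespace SimpleGraph

variable {V : Type*} [Fintype V] [DecidableEq V] (G : SimpleGraph V) [DecidableRel G.Adj]

def gainLaplacian (A : Matrix V V ℂ) : Matrix V V ℂ :=
  diagonal (fun i => (G.degree i : ℂ)) - A

theorem re_star_dotProduct_gainLaplacian_mulVec_single_add_single {A : Matrix V V ℂ} {s t : V}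
    (hne : s ≠ t) (hss : A s s = 0) (htt : A t t = 0) (hts : A t s = star (A s t))
    (hunit : ‖A s t‖ = 1) (β : ℝ) :
    (star (Pi.single s (A s t) + Pi.single t (β : ℂ)) ⬝ᵥ
        G.gainLaplacian A *ᵥ (Pi.single s (A s t) + Pi.single t (β : ℂ))).re =
      G.degree s - 2 * β + G.degree t * β ^ 2 := by
  have hnormSq : star (A s t) * A s t = 1 := by
    rw [Complex.star_def, Complex.conj_mul', hunit]; norm_num
  rw [star_single_add_single_dotProduct_mulVec]
  simp only [gainLaplacian, Matrix.sub_apply, diagonal_apply_eq, diagonal_apply_ne _ hne,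
    diagonal_apply_ne _ hne.symm, hss, htt, hts]
  rw [show star (β : ℂ) = β from Complex.conj_ofReal β, ← Complex.ofReal_re (_ - _ + _)]
  congr 1
  push_cast
  linear_combination ((G.degree s : ℂ) - 2 * β) * hnormSq

end SimpleGraph

theorem least_eigenvalue_degree_sqrt_bound_general {n : ℕ}
    (G : SimpleGraph (Fin n)) [DecidableRel G.Adj]
    (A : Matrix (Fin n) (Fin n) ℂ)
    (hsym : ∀ i j, A j i = star (A i j))
    (hunit : ∀ i j, G.Adj i j → ‖A i j‖ = 1)
    (hzero : ∀ i j, ¬ G.Adj i j → A i j = 0)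
    (L : Matrix (Fin n) (Fin n) ℂ)
    (hLdef : L = Matrix.diagonal (fun i => (G.degree i : ℂ)) - A)
    (hL : L.IsHermitian) :
    ∀ s t, G.Adj s t →
      ∃ k, hL.eigenvalues k ≤
        ((G.degree s : ℝ) + G.degree t -
          Real.sqrt (((G.degree s : ℝ) - G.degree t) ^ 2 + 4)) / 2 := by
  intro s t hst
  have : Nonempty (Fin n) := ⟨s⟩
  set β : ℝ := G.degree s - edgeEigenvalue (G.degree s) (G.degree t)
  set x : Fin n → ℂ := Pi.single s (A s t) + Pi.single t (β : ℂ)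
  have hquad : RCLike.re (star x ⬝ᵥ L *ᵥ x) = G.degree s - 2 * β + G.degree t * β ^ 2 := by
    rw [show L = G.gainLaplacian A from hLdef]
    exact G.re_star_dotProduct_gainLaplacian_mulVec_single_add_single (G.ne_of_adj hst)
      (hzero s s G.irrefl) (hzero t t G.irrefl) (hsym s t) (hunit s t hst) β
  have hnorm : RCLike.re (star x ⬝ᵥ x) = 1 + β ^ 2 := by
    rw [re_star_single_add_single_dotProduct_self (G.ne_of_adj hst), hunit s t hst,
      Complex.norm_real, Real.norm_eq_abs, sq_abs, one_pow]
  obtain ⟨k, hk⟩ := hL.exists_eigenvalues_mul_le x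
  rw [hquad, hnorm, sub_two_mul_add_mul_sq_eq_edgeEigenvalue_mul] at hk
  exact ⟨k, le_of_mul_le_mul_right hk (by positivity)⟩

/-- For a connected nonempty gain graph,
`λ₁(Φ) ≤ (d_s + d_t − √((d_s − d_t)² + 4))/2` for every edge `v_s ∼ v_t`. -/
theorem least_eigenvalue_degree_sqrt_bound {n : ℕ}
    (G : SimpleGraph (Fin n)) [DecidableRel G.Adj]
    (A : Matrix (Fin n) (Fin n) ℂ)
    (hsym : ∀ i j, A j i = star (A i j))
    (hunit : ∀ i j, G.Adj i j → ‖A i j‖ = 1)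
    (hzero : ∀ i j, ¬ G.Adj i j → A i j = 0)
    (L : Matrix (Fin n) (Fin n) ℂ)
    (hLdef : L = Matrix.diagonal (fun i => (G.degree i : ℂ)) - A)
    (hL : L.IsHermitian)
    (hconn : G.Connected) :
    ∀ s t, G.Adj s t →
      ∃ k, hL.eigenvalues k ≤
        ((G.degree s : ℝ) + G.degree t -
          Real.sqrt (((G.degree s : ℝ) - G.degree t) ^ 2 + 4)) / 2 :=
  least_eigenvalue_degree_sqrt_bound_general G A hsym hunit hzero L hLdef hL
end

section
/- Let Φ = (G, φ) be a connected complex unit gain graph containing a triangle on vertices v_s, v_t, v_r with cos θ_{str} = Re(φ(T_{s,t,r})), the real part of the gain of the triangle. Then λ₁(Φ) ≤ (d_s + d_t + d_r − 2 cos θ_{str} − 4)/3, and hence λ₁(Φ) ≤ min over triangles of this quantity. -/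
/-!
Test the Rayleigh quotient of `L = D - A` on the vector `x` supported on the triangle with
`x_s = 1`, `x_t = conj φ_{st}`, `x_r = conj (φ_{st} φ_{tr})`. This switching makes the edges
`st` and `tr` carry gain `1`, so of the six off-diagonal terms of `x* A x` four equal `1` and
the remaining two are the triangle gain and its conjugate:
`x* L x = d_s + d_t + d_r - 4 - 2 cos θ_{str}` while `x* x = 3`.
The least eigenvalue is at most this Rayleigh quotient.
-/

open Matrix Unitary ComplexConjugate
open scoped ComplexOrder

namespace Matrix.IsHermitian

variable {n 𝕜 : Type*} [Fintype n] [DecidableEq n] [RCLike 𝕜] {A : Matrix n n 𝕜}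

theorem posSemidef_sub_smul_one_s14 (hA : A.IsHermitian) {c : ℝ}
    (hc : ∀ i, c ≤ hA.eigenvalues i) : (A - (c : 𝕜) • 1).PosSemidef := by
  rw [← Algebra.algebraMap_eq_smul_one,
    ← AlgHomClass.commutes (conjStarAlgAut 𝕜 _ hA.eigenvectorUnitary)]
  conv => enter [1, 1]; rw [hA.spectral_theorem]
  rw [← map_sub, conjStarAlgAut_apply, isUnit_coe.posSemidef_star_right_conjugate_iff,
    algebraMap_eq_diagonal, diagonal_sub, posSemidef_diagonal_iff]
  intro i
  simp only [Function.comp_apply, Pi.algebraMap_apply, Algebra.algebraMap_self,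
    RingHom.id_apply, ← RCLike.ofReal_sub, RCLike.ofReal_nonneg, sub_nonneg]
  exact hc i

theorem exists_eigenvalue_mul_re_dotProduct_le (hA : A.IsHermitian) [Nonempty n] (x : n → 𝕜) :
    ∃ k, hA.eigenvalues k * RCLike.re (star x ⬝ᵥ x) ≤ RCLike.re (star x ⬝ᵥ A *ᵥ x) := by
  obtain ⟨k, hk⟩ := Finite.exists_min hA.eigenvalues
  refine ⟨k, ?_⟩
  have hpsd := (hA.posSemidef_sub_smul_one_s14 hk).re_dotProduct_nonneg x
  rw [sub_mulVec, dotProduct_sub, smul_mulVec, one_mulVec, dotProduct_smul, map_sub] at hpsd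
  simpa [RCLike.re_ofReal_mul] using hpsd

end Matrix.IsHermitian

theorem Matrix.star_sum_single_dotProduct_mulVec {m n R : Type*} [Fintype m] [Fintype n]
    [DecidableEq n] [CommSemiring R] [StarRing R] (M : Matrix n n R) (v : m → n) (c : m → R) :
    star (∑ k, Pi.single (v k) (c k)) ⬝ᵥ M *ᵥ ∑ k, Pi.single (v k) (c k) =
      ∑ k, ∑ l, star (c k) * M (v k) (v l) * c l := by
  simp only [star_sum, sum_dotProduct, mulVec_sum, dotProduct_sum, Pi.star_single,
    single_dotProduct, mulVec_single]
  rw [Finset.sum_comm]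
  simp [MulOpposite.smul_eq_mul_unop, mul_assoc]

theorem Complex.mul_conj_eq_one {z : ℂ} (hz : ‖z‖ = 1) : z * conj z = 1 := by
  rw [Complex.mul_conj', hz]
  norm_num

section Triangle

variable {ι : Type*} [Fintype ι] [DecidableEq ι]

def triangleVector (A : Matrix ι ι ℂ) (s t r : ι) : ι → ℂ :=
  ∑ k, Pi.single (![s, t, r] k) (![1, conj (A s t), conj (A s t * A t r)] k)

variable {A : Matrix ι ι ℂ} {s t r : ι}

theorem star_triangleVector_dotProduct_self (hst : s ≠ t) (htr : t ≠ r) (hrs : r ≠ s)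
    (hst1 : ‖A s t‖ = 1) (htr1 : ‖A t r‖ = 1) :
    star (triangleVector A s t r) ⬝ᵥ triangleVector A s t r = 3 := by
  nth_rw 2 [← one_mulVec (triangleVector A s t r)]
  rw [triangleVector, star_sum_single_dotProduct_mulVec]
  simp only [Fin.sum_univ_three, cons_val_zero, cons_val_one, cons_val, one_apply, hst, htr,
    hrs, hst.symm, htr.symm, hrs.symm, if_false, if_true, RCLike.star_def, map_mul, map_one,
    Complex.conj_conj, mul_one, mul_zero, zero_mul, add_zero, zero_add]
  linear_combination (1 + A t r * conj (A t r)) * Complex.mul_conj_eq_one hst1 +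
    Complex.mul_conj_eq_one htr1

theorem star_triangleVector_dotProduct_diagonal_sub_mulVec (hA : A.IsHermitian)
    (hst : s ≠ t) (htr : t ≠ r) (hrs : r ≠ s) (hst1 : ‖A s t‖ = 1) (htr1 : ‖A t r‖ = 1)
    (hs : A s s = 0) (ht : A t t = 0) (hr : A r r = 0) (d : ι → ℂ) :
    star (triangleVector A s t r) ⬝ᵥ (diagonal d - A) *ᵥ triangleVector A s t r =
      d s + d t + d r - 4 - (A s t * A t r * A r s + conj (A s t * A t r * A r s)) := by
  rw [triangleVector, star_sum_single_dotProduct_mulVec]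
  simp only [Fin.sum_univ_three, cons_val_zero, cons_val_one, cons_val, Matrix.sub_apply,
    diagonal_apply, hst, htr, hrs, hst.symm, htr.symm, hrs.symm, if_false, if_true, hs, ht, hr,
    ← hA.apply t s, ← hA.apply r t, ← hA.apply s r, RCLike.star_def, map_mul, map_one,
    Complex.conj_conj]
  linear_combination (d t - 2 + (d r - 2) * (A t r * conj (A t r))) *
    Complex.mul_conj_eq_one hst1 + (d r - 2) * Complex.mul_conj_eq_one htr1

end Triangle

theorem least_eigenvalue_triangle_bound_general {n : ℕ}
    (G : SimpleGraph (Fin n)) [DecidableRel G.Adj]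
    (A : Matrix (Fin n) (Fin n) ℂ)
    (hsym : ∀ i j, A j i = star (A i j))
    (hunit : ∀ i j, G.Adj i j → ‖A i j‖ = 1)
    (hzero : ∀ i j, ¬ G.Adj i j → A i j = 0)
    (L : Matrix (Fin n) (Fin n) ℂ)
    (hLdef : L = Matrix.diagonal (fun i => (G.degree i : ℂ)) - A)
    (hL : L.IsHermitian) :
    ∀ s t r, G.Adj s t → G.Adj t r → G.Adj r s →
      ∃ k, hL.eigenvalues k ≤
        ((G.degree s : ℝ) + G.degree t + G.degree r -
          2 * (A s t * A t r * A r s).re - 4) / 3 := by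
  intro s t r hst htr hrs
  have : Nonempty (Fin n) := ⟨s⟩
  have hA : A.IsHermitian := IsHermitian.ext fun i j => (hsym j i).symm
  have hdiag (i : Fin n) : A i i = 0 := hzero i i G.irrefl
  have hnorm := star_triangleVector_dotProduct_self (G.ne_of_adj hst) (G.ne_of_adj htr)
    (G.ne_of_adj hrs) (hunit s t hst) (hunit t r htr)
  have hquad := star_triangleVector_dotProduct_diagonal_sub_mulVec hA (G.ne_of_adj hst)
    (G.ne_of_adj htr) (G.ne_of_adj hrs) (hunit s t hst) (hunit t r htr) (hdiag s) (hdiag t)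
    (hdiag r) (fun i => (G.degree i : ℂ))
  rw [← hLdef] at hquad
  obtain ⟨k, hk⟩ := hL.exists_eigenvalue_mul_re_dotProduct_le (triangleVector A s t r)
  refine ⟨k, ?_⟩
  rw [hnorm, hquad] at hk
  simp only [RCLike.re_to_complex, Complex.sub_re, Complex.add_re, Complex.conj_re,
    Complex.natCast_re, Complex.re_ofNat] at hk
  linarith

/-- Triangle bound for `λ₁(Φ)`: for every triangle on `v_s, v_t, v_r` with
`cos θ_{str} = Re(φ_{st}φ_{tr}φ_{rs})`, we have
`λ₁(Φ) ≤ (d_s + d_t + d_r − 2cos θ_{str} − 4)/3`. -/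
theorem least_eigenvalue_triangle_bound {n : ℕ}
    (G : SimpleGraph (Fin n)) [DecidableRel G.Adj]
    (A : Matrix (Fin n) (Fin n) ℂ)
    (hsym : ∀ i j, A j i = star (A i j))
    (hunit : ∀ i j, G.Adj i j → ‖A i j‖ = 1)
    (hzero : ∀ i j, ¬ G.Adj i j → A i j = 0)
    (L : Matrix (Fin n) (Fin n) ℂ)
    (hLdef : L = Matrix.diagonal (fun i => (G.degree i : ℂ)) - A)
    (hL : L.IsHermitian)
    (hconn : G.Connected) :
    ∀ s t r, G.Adj s t → G.Adj t r → G.Adj r s →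
      ∃ k, hL.eigenvalues k ≤
        ((G.degree s : ℝ) + G.degree t + G.degree r -
          2 * (A s t * A t r * A r s).re - 4) / 3 :=
  least_eigenvalue_triangle_bound_general G A hsym hunit hzero L hLdef hL
end

section
/- Let Φ be a complex unit gain graph with gain Laplacian L(Φ). For every positive integer k, the largest eigenvalue satisfies λ_n(Φ) ≥ ( max_i (L^k(Φ))_{ii} )^{1/k}, and moreover λ_n(Φ) = lim_{k→∞} ( max_i (L^k(Φ))_{ii} )^{1/k}. -/
/-!
The gain Laplacian is positive semidefinite by Gershgorin's theorem: row `i` has diagonal entry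
`deg i` and off-diagonal entries of total modulus `deg i`. Diagonalising `L = U diag(μ) U*`
with `U` unitary, `(L^k)_{ii} = ∑_j μ_j^k |U_{ij}|²` is a convex combination of the `μ_j^k`,
hence at most `λ_n^k`, while `∑_i (L^k)_{ii} = tr L^k = ∑_j μ_j^k ≥ λ_n^k` gives
`max_i (L^k)_{ii} ≥ λ_n^k / n`. Taking `k`-th roots, `n^{1/k} → 1` squeezes the bounds
to `λ_n`.
-/

open Matrix Filter Topology
open scoped ComplexOrder

lemma rpow_one_div_le_of_le_pow {s M : ℝ} {k : ℕ} (hs : 0 ≤ s) (hM : 0 ≤ M) (hk : k ≠ 0)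
    (h : s ≤ M ^ k) : s ^ ((1 : ℝ) / k) ≤ M := by
  rwa [one_div, Real.rpow_inv_le_iff_of_pos hs hM (by positivity), Real.rpow_natCast]

lemma tendsto_rpow_one_div_of_pow_le_mul_of_le_pow {s : ℕ → ℝ} {M c : ℝ} (hM : 0 ≤ M)
    (hc : 0 < c) (hlow : ∀ k, M ^ k ≤ c * s k) (hup : ∀ k, s k ≤ M ^ k) :
    Tendsto (fun k : ℕ => s k ^ ((1 : ℝ) / k)) atTop (𝓝 M) := by
  have hs : ∀ k, 0 ≤ s k := fun k =>
    (mul_nonneg_iff_of_pos_left hc).mp ((pow_nonneg hM k).trans (hlow k))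
  have hc_root : Tendsto (fun k : ℕ => c ^ ((1 : ℝ) / k)) atTop (𝓝 1) := by
    simpa using tendsto_const_nhds.rpow tendsto_one_div_atTop_nhds_zero_nat (Or.inl hc.ne')
  have hlower : Tendsto (fun k : ℕ => M / c ^ ((1 : ℝ) / k)) atTop (𝓝 M) := by
    simpa [Pi.div_def] using tendsto_const_nhds.div hc_root one_ne_zero
  refine tendsto_of_tendsto_of_tendsto_of_le_of_le' hlower tendsto_const_nhds ?_ ?_ <;>
    filter_upwards [eventually_ne_atTop 0] with k hk
  · rw [div_le_iff₀ (Real.rpow_pos_of_pos hc _), mul_comm, ← Real.mul_rpow hc.le (hs k),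
      one_div, Real.le_rpow_inv_iff_of_pos hM (mul_nonneg hc.le (hs k)) (by positivity),
      Real.rpow_natCast]
    exact hlow k
  · exact rpow_one_div_le_of_le_pow (hs k) hM hk (hup k)

namespace Matrix

variable {𝕜 ι : Type*} [RCLike 𝕜] [Fintype ι] [DecidableEq ι]

lemma IsHermitian.hasEigenvalue_eigenvalues {A : Matrix ι ι 𝕜} (hA : A.IsHermitian) (j : ι) :
    Module.End.HasEigenvalue (toLin' A) (hA.eigenvalues j : 𝕜) := by
  rw [Module.End.hasEigenvalue_iff_mem_spectrum, spectrum_toLin', hA.spectrum_eq_image_range]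
  exact ⟨_, ⟨j, rfl⟩, rfl⟩

lemma IsHermitian.posSemidef_of_sum_norm_le_re_diag {A : Matrix ι ι 𝕜} (hA : A.IsHermitian)
    (hdom : ∀ i, ∑ j ∈ Finset.univ.erase i, ‖A i j‖ ≤ RCLike.re (A i i)) : A.PosSemidef := by
  refine hA.posSemidef_iff_eigenvalues_nonneg.mpr fun j =>
    show 0 ≤ hA.eigenvalues j from ?_
  obtain ⟨i, hi⟩ := eigenvalue_mem_ball (hA.hasEigenvalue_eigenvalues j)
  rw [Metric.mem_closedBall, dist_eq_norm'] at hi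
  have hre : RCLike.re (A i i) - hA.eigenvalues j ≤ ‖A i i - (hA.eigenvalues j : 𝕜)‖ := by
    simpa using RCLike.re_le_norm (A i i - (hA.eigenvalues j : 𝕜))
  linarith [hdom i]

lemma sum_norm_sq_apply_of_mem_unitaryGroup {U : Matrix ι ι 𝕜} (hU : U ∈ unitaryGroup ι 𝕜)
    (i : ι) : ∑ j, ‖U i j‖ ^ 2 = 1 := by
  have h := congr_fun₂ (mem_unitaryGroup_iff.mp hU) i i
  rw [mul_apply, one_apply_eq] at h
  exact_mod_cast (by simpa [RCLike.mul_conj] using h : ((∑ j, ‖U i j‖ ^ 2 : ℝ) : 𝕜) = 1)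

namespace IsHermitian

variable {A : Matrix ι ι 𝕜} (hA : A.IsHermitian)

lemma pow_eq_eigenvectorUnitary_mul (k : ℕ) :
    A ^ k = (hA.eigenvectorUnitary : Matrix ι ι 𝕜) *
      diagonal (fun j => (hA.eigenvalues j : 𝕜) ^ k) *
      star (hA.eigenvectorUnitary : Matrix ι ι 𝕜) := by
  conv_lhs => rw [hA.spectral_theorem]
  rw [← map_pow, diagonal_pow, Unitary.conjStarAlgAut_apply]
  rfl

lemma re_pow_apply_self (k : ℕ) (i : ι) :
    RCLike.re ((A ^ k) i i) = ∑ j, hA.eigenvalues j ^ k * ‖hA.eigenvectorUnitary i j‖ ^ 2 := by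
  rw [hA.pow_eq_eigenvectorUnitary_mul, mul_apply, map_sum]
  refine Finset.sum_congr rfl fun j _ => ?_
  rw [mul_diagonal, star_apply, RCLike.star_def, mul_right_comm, RCLike.mul_conj]
  norm_cast
  ring

lemma trace_pow (k : ℕ) : (A ^ k).trace = ∑ j, (hA.eigenvalues j : 𝕜) ^ k := by
  rw [hA.pow_eq_eigenvectorUnitary_mul, trace_mul_cycle, Unitary.coe_star_mul_self, one_mul,
    trace_diagonal]

end IsHermitian

namespace PosSemidef

variable {A : Matrix ι ι 𝕜}

lemma re_pow_apply_self_nonneg (hA : A.PosSemidef) (k : ℕ) (i : ι) :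
    0 ≤ RCLike.re ((A ^ k) i i) :=
  RCLike.nonneg_iff.mp ((hA.pow k).diag_nonneg) |>.1

lemma iSup_eigenvalues_nonneg (hA : A.PosSemidef) : 0 ≤ ⨆ j, hA.1.eigenvalues j :=
  Real.iSup_nonneg hA.eigenvalues_nonneg

lemma re_pow_apply_self_le (hA : A.PosSemidef) (k : ℕ) (i : ι) :
    RCLike.re ((A ^ k) i i) ≤ (⨆ j, hA.1.eigenvalues j) ^ k := by
  have hle : ∀ j, hA.1.eigenvalues j ≤ ⨆ j, hA.1.eigenvalues j :=
    le_ciSup (Set.finite_range _).bddAbove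
  calc RCLike.re ((A ^ k) i i)
      = ∑ j, hA.1.eigenvalues j ^ k * ‖hA.1.eigenvectorUnitary i j‖ ^ 2 :=
        hA.1.re_pow_apply_self k i
    _ ≤ ∑ j, (⨆ j, hA.1.eigenvalues j) ^ k * ‖hA.1.eigenvectorUnitary i j‖ ^ 2 := by
        gcongr with j
        exacts [hA.eigenvalues_nonneg j, hle j]
    _ = (⨆ j, hA.1.eigenvalues j) ^ k := by
        rw [← Finset.mul_sum, sum_norm_sq_apply_of_mem_unitaryGroup hA.1.eigenvectorUnitary.2,
          mul_one]

lemma iSup_re_pow_apply_self_le (hA : A.PosSemidef) (k : ℕ) :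
    ⨆ i, RCLike.re ((A ^ k) i i) ≤ (⨆ j, hA.1.eigenvalues j) ^ k :=
  Real.iSup_le (hA.re_pow_apply_self_le k) (pow_nonneg hA.iSup_eigenvalues_nonneg k)

lemma pow_iSup_eigenvalues_le_card_mul [Nonempty ι] (hA : A.PosSemidef) (k : ℕ) :
    (⨆ j, hA.1.eigenvalues j) ^ k ≤ Fintype.card ι * ⨆ i, RCLike.re ((A ^ k) i i) := by
  obtain ⟨j₀, hj₀⟩ := exists_eq_ciSup_of_finite (f := hA.1.eigenvalues)
  calc (⨆ j, hA.1.eigenvalues j) ^ k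
      ≤ ∑ j, hA.1.eigenvalues j ^ k := by
        rw [← hj₀]
        exact Finset.single_le_sum (fun j _ => pow_nonneg (hA.eigenvalues_nonneg j) k)
          (Finset.mem_univ j₀)
    _ = ∑ i, RCLike.re ((A ^ k) i i) := by
        simpa [trace] using congrArg RCLike.re (hA.1.trace_pow k).symm
    _ ≤ ∑ _i : ι, ⨆ i, RCLike.re ((A ^ k) i i) :=
        Finset.sum_le_sum fun i _ =>
          le_ciSup (f := fun i => RCLike.re ((A ^ k) i i)) (Set.finite_range _).bddAbove i
    _ = Fintype.card ι * ⨆ i, RCLike.re ((A ^ k) i i) := by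
        rw [Finset.sum_const, Finset.card_univ, nsmul_eq_mul]

lemma iSup_re_pow_apply_self_rpow_le (hA : A.PosSemidef) {k : ℕ} (hk : k ≠ 0) :
    (⨆ i, RCLike.re ((A ^ k) i i)) ^ ((1 : ℝ) / k) ≤ ⨆ j, hA.1.eigenvalues j :=
  rpow_one_div_le_of_le_pow (Real.iSup_nonneg (hA.re_pow_apply_self_nonneg k))
    hA.iSup_eigenvalues_nonneg hk (hA.iSup_re_pow_apply_self_le k)

lemma tendsto_iSup_re_pow_apply_self_rpow (hA : A.PosSemidef) :
    Tendsto (fun k : ℕ => (⨆ i, RCLike.re ((A ^ k) i i)) ^ ((1 : ℝ) / k)) atTop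
      (𝓝 (⨆ j, hA.1.eigenvalues j)) := by
  rcases isEmpty_or_nonempty ι with _ | _
  · simp only [Real.iSup_of_isEmpty]
    refine tendsto_const_nhds.congr' ?_
    filter_upwards [eventually_ne_atTop 0] with k hk
    rw [Real.zero_rpow (by positivity)]
  · exact tendsto_rpow_one_div_of_pow_le_mul_of_le_pow hA.iSup_eigenvalues_nonneg
      (by exact_mod_cast Fintype.card_pos) hA.pow_iSup_eigenvalues_le_card_mul
      hA.iSup_re_pow_apply_self_le

end PosSemidef

end Matrix

section GainGraph

variable {𝕜 V : Type*} [RCLike 𝕜] [Fintype V] (G : SimpleGraph V) [DecidableRel G.Adj]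
  {A : Matrix V V 𝕜}

lemma SimpleGraph.sum_norm_le_degree (hle : ∀ i j, G.Adj i j → ‖A i j‖ ≤ 1)
    (hzero : ∀ i j, ¬ G.Adj i j → A i j = 0) (i : V) :
    ∑ j, ‖A i j‖ ≤ G.degree i :=
  calc ∑ j, ‖A i j‖ ≤ ∑ j, if G.Adj i j then (1 : ℝ) else 0 :=
        Finset.sum_le_sum fun j _ => by
          split_ifs with h
          exacts [hle i j h, by simp [hzero i j h]]
    _ = G.degree i := by
        rw [Finset.sum_boole, ← G.card_neighborFinset_eq_degree, G.neighborFinset_eq_filter]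

lemma SimpleGraph.gainLaplacian_posSemidef [DecidableEq V]
    (hle : ∀ i j, G.Adj i j → ‖A i j‖ ≤ 1) (hzero : ∀ i j, ¬ G.Adj i j → A i j = 0)
    (hL : (diagonal (fun i => (G.degree i : 𝕜)) - A).IsHermitian) :
    (diagonal (fun i => (G.degree i : 𝕜)) - A).PosSemidef := by
  refine hL.posSemidef_of_sum_norm_le_re_diag fun i => ?_
  have hoff : ∀ j ∈ Finset.univ.erase i,
      ‖(diagonal (fun i => (G.degree i : 𝕜)) - A) i j‖ = ‖A i j‖ :=
    fun j hj => by simp [diagonal_apply_ne _ (Finset.ne_of_mem_erase hj).symm]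
  rw [Finset.sum_congr rfl hoff, Matrix.sub_apply, diagonal_apply_eq, hzero i i G.irrefl,
    sub_zero, RCLike.natCast_re]
  exact (Finset.sum_le_univ_sum_of_nonneg fun j => norm_nonneg (A i j)).trans
    (G.sum_norm_le_degree hle hzero i)

end GainGraph

theorem largest_eigenvalue_diag_power_bound_general {n : ℕ}
    (G : SimpleGraph (Fin n)) [DecidableRel G.Adj]
    (A : Matrix (Fin n) (Fin n) ℂ)
    (hunit : ∀ i j, G.Adj i j → ‖A i j‖ = 1)
    (hzero : ∀ i j, ¬ G.Adj i j → A i j = 0)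
    (L : Matrix (Fin n) (Fin n) ℂ)
    (hLdef : L = Matrix.diagonal (fun i => (G.degree i : ℂ)) - A)
    (hL : L.IsHermitian) :
    (∀ k : ℕ, 1 ≤ k →
      (⨆ i, ((L ^ k) i i).re) ^ ((1 : ℝ) / k) ≤ ⨆ j, hL.eigenvalues j) ∧
    Tendsto (fun k : ℕ => (⨆ i, ((L ^ k) i i).re) ^ ((1 : ℝ) / k)) atTop
      (𝓝 (⨆ j, hL.eigenvalues j)) := by
  have hPSD : L.PosSemidef := by
    subst hLdef
    exact G.gainLaplacian_posSemidef (fun i j h => (hunit i j h).le) hzero hL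
  exact ⟨fun k hk => hPSD.iSup_re_pow_apply_self_rpow_le (by omega),
    hPSD.tendsto_iSup_re_pow_apply_self_rpow⟩

/-- The largest gain Laplacian eigenvalue dominates `(max_i (L^k)_{ii})^{1/k}` for every
`k ≥ 1`, and this sequence of bounds converges to `λ_n(Φ)`. -/
theorem largest_eigenvalue_diag_power_bound {n : ℕ}
    (G : SimpleGraph (Fin n)) [DecidableRel G.Adj]
    (A : Matrix (Fin n) (Fin n) ℂ)
    (hsym : ∀ i j, A j i = star (A i j))
    (hunit : ∀ i j, G.Adj i j → ‖A i j‖ = 1)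
    (hzero : ∀ i j, ¬ G.Adj i j → A i j = 0)
    (L : Matrix (Fin n) (Fin n) ℂ)
    (hLdef : L = Matrix.diagonal (fun i => (G.degree i : ℂ)) - A)
    (hL : L.IsHermitian) :
    (∀ k : ℕ, 1 ≤ k →
      (⨆ i, ((L ^ k) i i).re) ^ ((1 : ℝ) / k) ≤ ⨆ j, hL.eigenvalues j) ∧
    Tendsto (fun k : ℕ => (⨆ i, ((L ^ k) i i).re) ^ ((1 : ℝ) / k)) atTop
      (𝓝 (⨆ j, hL.eigenvalues j)) :=
  largest_eigenvalue_diag_power_bound_general G A hunit hzero L hLdef hL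
end

section
/- Let Φ = (G, φ) be a connected complex unit gain graph on n vertices and C = diag(c₁, …, c_n) any invertible complex diagonal matrix. Then the largest Laplacian eigenvalue satisfies λ_n(Φ) ≤ max over vertices v_i of ( d_i + Σ_{v_j : v_i ∼ v_j} |c_j|/|c_i| ). -/
/-!
Every eigenvalue of `L` is also an eigenvalue of the similar matrix `C⁻¹ L C`, whose `i`-th
row has diagonal entry `dᵢ` and, because every gain has modulus one, off-diagonal entries of
absolute values `|c_j| / |c_i|` for `v_j ∼ v_i`. Gershgorin's circle theorem puts the (real)
eigenvalue in one of these discs, hence below `dᵢ + Σ_{v_j ∼ v_i} |c_j| / |c_i|` for some `i`.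
-/

open Matrix BigOperators Finset

namespace Matrix

variable {n : Type*} [Fintype n] [DecidableEq n]

theorem spectrum_diagonal_inv_mul_mul_diagonal {K : Type*} [Field K] {c : n → K}
    (hc : ∀ i, c i ≠ 0) (M : Matrix n n K) :
    spectrum K (diagonal c⁻¹ * M * diagonal c) = spectrum K M := by
  let u : (Matrix n n K)ˣ :=
    ⟨diagonal c, diagonal c⁻¹, by simp [hc], by simp [hc]⟩
  exact spectrum.units_conjugate' (u := u)

theorem exists_le_re_diag_add_sum_norm_of_mem_spectrum {𝕜 : Type*} [RCLike 𝕜] {A : Matrix n n 𝕜}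
    {μ : ℝ} (hμ : (μ : 𝕜) ∈ spectrum 𝕜 A) :
    ∃ k, μ ≤ RCLike.re (A k k) + ∑ j ∈ univ.erase k, ‖A k j‖ := by
  rw [← spectrum_toLin', ← Module.End.hasEigenvalue_iff_mem_spectrum] at hμ
  obtain ⟨k, hk⟩ := eigenvalue_mem_ball hμ
  refine ⟨k, ?_⟩
  rw [mem_closedBall_iff_norm] at hk
  have hre := RCLike.re_le_norm ((μ : 𝕜) - A k k)
  simp only [map_sub, RCLike.ofReal_re] at hre
  linarith

theorem exists_le_re_diag_add_sum_scaled_norm_of_mem_spectrum {𝕜 : Type*} [RCLike 𝕜]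
    {A : Matrix n n 𝕜} {c : n → 𝕜} (hc : ∀ i, c i ≠ 0) {μ : ℝ} (hμ : (μ : 𝕜) ∈ spectrum 𝕜 A) :
    ∃ k, μ ≤ RCLike.re (A k k) + ∑ j ∈ univ.erase k, ‖c j‖ / ‖c k‖ * ‖A k j‖ := by
  rw [← spectrum_diagonal_inv_mul_mul_diagonal hc] at hμ
  obtain ⟨k, hk⟩ := exists_le_re_diag_add_sum_norm_of_mem_spectrum hμ
  refine ⟨k, ?_⟩
  have hentry : ∀ i j, (diagonal c⁻¹ * A * diagonal c) i j = (c i)⁻¹ * A i j * c j := by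
    intro i j
    simp [diagonal_mul, mul_diagonal]
  simp only [hentry] at hk
  rw [mul_right_comm, inv_mul_cancel₀ (hc k), one_mul] at hk
  refine hk.trans_eq (congrArg _ (sum_congr rfl fun j _ => ?_))
  rw [norm_mul, norm_mul, norm_inv]
  ring

end Matrix

namespace SimpleGraph

variable {V : Type*} [Fintype V] [DecidableEq V] (G : SimpleGraph V) [DecidableRel G.Adj]
  {E : Type*} [NormedAddCommGroup E] {A : Matrix V V E}

theorem sum_erase_mul_norm_diagonal_sub_apply (hunit : ∀ i j, G.Adj i j → ‖A i j‖ = 1)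
    (hzero : ∀ i j, ¬ G.Adj i j → A i j = 0) (d : V → E) (w : V → ℝ) (i : V) :
    ∑ j ∈ univ.erase i, w j * ‖(diagonal d - A) i j‖ = ∑ j ∈ G.neighborFinset i, w j := by
  have hnorm : ∀ j, ‖A i j‖ = if G.Adj i j then 1 else 0 := fun j => by
    split_ifs with h
    · exact hunit i j h
    · rw [hzero i j h, norm_zero]
  calc ∑ j ∈ univ.erase i, w j * ‖(diagonal d - A) i j‖
      = ∑ j ∈ univ.erase i, w j * ‖A i j‖ := sum_congr rfl fun j hj => by
        rw [Matrix.sub_apply, diagonal_apply_ne _ (ne_of_mem_erase hj).symm, zero_sub, norm_neg]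
    _ = ∑ j, w j * ‖A i j‖ := sum_erase _ (by simp [hzero i i G.irrefl])
    _ = ∑ j ∈ G.neighborFinset i, w j := by
        simp [hnorm, neighborFinset_eq_filter, sum_filter]

end SimpleGraph

theorem largest_eigenvalue_diagonal_similarity_bound_general {n : ℕ}
    (G : SimpleGraph (Fin n)) [DecidableRel G.Adj]
    (A : Matrix (Fin n) (Fin n) ℂ)
    (hunit : ∀ i j, G.Adj i j → ‖A i j‖ = 1)
    (hzero : ∀ i j, ¬ G.Adj i j → A i j = 0)
    (L : Matrix (Fin n) (Fin n) ℂ)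
    (hLdef : L = Matrix.diagonal (fun i => (G.degree i : ℂ)) - A)
    (hL : L.IsHermitian)
    (c : Fin n → ℂ) (hc : ∀ i, c i ≠ 0) :
    ∀ k, hL.eigenvalues k ≤
      ⨆ i, ((G.degree i : ℝ) +
        ∑ j ∈ G.neighborFinset i, ‖c j‖ / ‖c i‖) := by
  intro k
  subst hLdef
  obtain ⟨i, hi⟩ := exists_le_re_diag_add_sum_scaled_norm_of_mem_spectrum hc
    (spectrum.algebraMap_mem ℂ (hL.eigenvalues_mem_spectrum_real k))
  rw [Matrix.sub_apply, diagonal_apply_eq, hzero i i G.irrefl, sub_zero,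
    G.sum_erase_mul_norm_diagonal_sub_apply hunit hzero] at hi
  exact hi.trans (le_ciSup_of_le (Set.finite_range _).bddAbove i (by simp))

/-- Gershgorin-type bound: for any nonzero weights `c i`, the largest gain Laplacian
eigenvalue is at most `max_i (d_i + Σ_{v_j ∼ v_i} |c_j|/|c_i|)`. -/
theorem largest_eigenvalue_diagonal_similarity_bound {n : ℕ}
    (G : SimpleGraph (Fin n)) [DecidableRel G.Adj]
    (A : Matrix (Fin n) (Fin n) ℂ)
    (hsym : ∀ i j, A j i = star (A i j))
    (hunit : ∀ i j, G.Adj i j → ‖A i j‖ = 1)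
    (hzero : ∀ i j, ¬ G.Adj i j → A i j = 0)
    (L : Matrix (Fin n) (Fin n) ℂ)
    (hLdef : L = Matrix.diagonal (fun i => (G.degree i : ℂ)) - A)
    (hL : L.IsHermitian)
    (hconn : G.Connected)
    (c : Fin n → ℂ) (hc : ∀ i, c i ≠ 0) :
    ∀ k, hL.eigenvalues k ≤
      ⨆ i, ((G.degree i : ℝ) +
        ∑ j ∈ G.neighborFinset i, ‖c j‖ / ‖c i‖) :=
  largest_eigenvalue_diagonal_similarity_bound_general G A hunit hzero L hLdef hL c hc
end
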